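/- arXiv:1811.00594 — 3 statements merged into one kernel-verified Lean document; each statement's English description precedes it below -/
import Mathlib

section
/- Let θ : A → A^λ be a primitive substitution of constant length λ ≥ 2, ~θ its synchronizing part, and Θ = θ ∨ ~θ the substitution on the alphabet overline{𝒳} = {(a, M) : M ∈ 𝒳(θ), a ∈ M} defined by Θ(a,M)_j = (θ(a)_j, ~θ(M)_j). Then Θ is primitive. Moreover, if θ(a₀)_0 = a₀ and M₀ ∈ 𝒳(θ) satisfy a₀ ∈ M₀ and ~θ(M₀)_0 = M₀ (so that Θ(a₀,M₀)_0 = (a₀,M₀)), then h(Θ) = h(θ). -/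
open Filter Topology

/-- `substIter θ l k a j` is the `j`-th letter of `θ^k(a)`, where `θ : A → A^l` is a
substitution of constant length `l` (the letters of `θ(a)` being `θ a 0, …, θ a (l-1)`).
It is meaningful for `j < l ^ k` and satisfies
`θ^{k+1}(a)_{j'·l + r} = θ(θ^k(a)_{j'})_r`. -/
def substIter {A : Type*} (θ : A → ℕ → A) (l : ℕ) : ℕ → A → ℕ → A
  | 0, a, _ => a
  | k + 1, a, j => θ (substIter θ l k a (j / l)) (j % l)

/-- A substitution of constant length `l` is primitive if some iterate of every letter
contains every letter. -/
def SubstPrimitive {A : Type*} (θ : A → ℕ → A) (l : ℕ) : Prop :=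
  ∃ k, 1 ≤ k ∧ ∀ a b : A, ∃ j, j < l ^ k ∧ substIter θ l k a j = b

/-- Primitivity of a substitution restricted to a sub-alphabet `S`. -/
def SubstPrimitiveOn {A : Type*} (θ : A → ℕ → A) (l : ℕ) (S : Set A) : Prop :=
  ∃ k, 1 ≤ k ∧ ∀ a ∈ S, ∀ b ∈ S, ∃ j, j < l ^ k ∧ substIter θ l k a j = b

/-- The column number of a substitution of constant length `l`, restricted to the
sub-alphabet `S`: the minimal cardinality of a column set `{θ^k(a)_j : a ∈ S}`. -/
noncomputable def columnNumberOn {A : Type*} (θ : A → ℕ → A) (l : ℕ) (S : Set A) : ℕ :=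
  sInf { n : ℕ | ∃ k, 1 ≤ k ∧ ∃ j, j < l ^ k ∧
    ((fun a => substIter θ l k a j) '' S).ncard = n }

/-- The column number `c(θ)` of a substitution of constant length `l`. -/
noncomputable def columnNumber {A : Type*} (θ : A → ℕ → A) (l : ℕ) : ℕ :=
  columnNumberOn θ l Set.univ

/-- The one-sided fixed point `u` of `θ` obtained by iterating `θ` at a letter `a₀`
with `θ(a₀)_0 = a₀`: `u n = θ^k(a₀)_n` for any `k` with `n < l^k`. -/
def substFixedPoint {A : Type*} (θ : A → ℕ → A) (l : ℕ) (a₀ : A) : ℕ → A :=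
  fun n => substIter θ l (n + 1) a₀ n

/-- The height `h(θ)`: the largest `m ≥ 1` coprime to `l` dividing
`gcd {r ≥ 1 : u[r] = u[0]}`, i.e. dividing every return time of `u[0]`. -/
noncomputable def substHeight {A : Type*} (θ : A → ℕ → A) (l : ℕ) (a₀ : A) : ℕ :=
  sSup { m : ℕ | 1 ≤ m ∧ Nat.Coprime m l ∧
    ∀ r : ℕ, 1 ≤ r → substFixedPoint θ l a₀ r = substFixedPoint θ l a₀ 0 → m ∣ r }

/-- The subshift `X_θ ⊆ A^ℤ`: all `x` each of whose finite blocks occurs in some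
`θ^k(a)`. -/
def subshift {A : Type*} (θ : A → ℕ → A) (l : ℕ) : Set (ℤ → A) :=
  { x | ∀ (i : ℤ) (n : ℕ), ∃ k, 1 ≤ k ∧ ∃ a : A, ∃ j : ℕ, j + n ≤ l ^ k ∧
      ∀ m : ℕ, m < n → x (i + (m : ℤ)) = substIter θ l k a (j + m) }

/-- The subshift `X_x ⊆ A^ℤ` generated by a one-sided sequence `x ∈ A^ℕ`: all `z`
each of whose finite blocks occurs in `x`. -/
def subshiftOf {A : Type*} (x : ℕ → A) : Set (ℤ → A) :=
  { z | ∀ (i : ℤ) (n : ℕ), ∃ j : ℕ, ∀ m : ℕ, m < n → z (i + (m : ℤ)) = x (j + m) }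

/-- The left shift on `A^ℤ`. -/
def shift {A : Type*} (x : ℤ → A) : ℤ → A := fun n => x (n + 1)

/-- A bounded arithmetic function. -/
def BoundedSeq (u : ℕ → ℂ) : Prop := ∃ C : ℝ, ∀ n, ‖u n‖ ≤ C

/-- A multiplicative arithmetic function: `u(mn) = u(m)u(n)` for coprime `m, n`. -/
def MultiplicativeSeq (u : ℕ → ℂ) : Prop :=
  ∀ m n : ℕ, Nat.Coprime m n → u (m * n) = u m * u n

/-- An aperiodic arithmetic function: zero mean along every arithmetic progression. -/
def AperiodicSeq (u : ℕ → ℂ) : Prop :=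
  ∀ a b : ℕ, 1 ≤ a →
    Tendsto (fun N : ℕ => (N : ℂ)⁻¹ * ∑ n ∈ Finset.Icc 1 N, u (a * n + b)) atTop (nhds 0)

/-- The Weyl pseudo-metric
`d_W(x,y) = limsup_N sup_{ℓ ≥ 1} (1/N)·#{ℓ ≤ n < ℓ+N : x n ≠ y n}`. -/
noncomputable def weylDist {B : Type*} (x y : ℕ → B) : ℝ :=
  limsup (fun N : ℕ =>
    ⨆ ℓ : ℕ, ⨆ _ : 1 ≤ ℓ,
      (({ n : ℕ | ℓ ≤ n ∧ n < ℓ + N ∧ x n ≠ y n }.ncard : ℝ) / N)) atTop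

/-- A periodic sequence. -/
def IsPeriodicSeq {B : Type*} (v : ℕ → B) : Prop :=
  ∃ p, 1 ≤ p ∧ ∀ n, v (n + p) = v n

/-- Weyl rational almost periodicity: a `d_W`-limit of periodic sequences. -/
def WRAPSeq {B : Type*} (x : ℕ → B) : Prop :=
  ∀ ε : ℝ, 0 < ε → ∃ v : ℕ → B, IsPeriodicSeq v ∧ weylDist x v < ε

/-- The family `𝒳(θ)` of column sets realizing the column number of `θ`. -/
noncomputable def columnSets {A : Type*} (θ : A → ℕ → A) (l : ℕ) : Set (Set A) :=
  { M | (∃ k, 1 ≤ k ∧ ∃ j, j < l ^ k ∧ M = (fun a => substIter θ l k a j) '' Set.univ) ∧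
        M.ncard = columnNumber θ l }

/-- The synchronizing part `~θ` of `θ`, as a substitution on subsets of the alphabet:
`~θ(M)_j = {θ(a)_j : a ∈ M}`. -/
def synchPart {A : Type*} (θ : A → ℕ → A) : Set A → ℕ → Set A :=
  fun M j => (fun a => θ a j) '' M

/-- The joining `θ ∨ ζ` of two substitutions of the same constant length. -/
def joinSub {A B : Type*} (θ : A → ℕ → A) (ζ : B → ℕ → B) : A × B → ℕ → A × B :=
  fun p j => (θ p.1 j, ζ p.2 j)

/-- The pure base `θ^{(h)}` of `θ`: a substitution of length `l` on blocks of length `h`,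
`θ^{(h)}(w)_j = θ(w)[jh, (j+1)h−1]`, where `θ(w)` is the concatenation
`θ(w_0)…θ(w_{h-1})`. -/
def pureBase {A : Type*} (θ : A → ℕ → A) (l h : ℕ) : (Fin h → A) → ℕ → (Fin h → A) :=
  fun w j i => θ (w ⟨(j * h + i.val) / l % h, Nat.mod_lt _ i.pos⟩) ((j * h + i.val) % l)

/-- Iterated cocycle `σ^{(k)}`, with `σ^{(1)} = σ` and
`σ^{(k+1)}(M, j₁·l + j₂) = σ^{(k)}(M, j₁) ∘ σ(~θ^k(M)_{j₁}, j₂)`. -/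
def sigmaIter {X : Type*} {c : ℕ} (tilde : X → ℕ → X)
    (σ : X → ℕ → Equiv.Perm (Fin c)) (l : ℕ) : ℕ → X → ℕ → Equiv.Perm (Fin c)
  | 0, _, _ => 1
  | k + 1, M, j =>
      sigmaIter tilde σ l k M (j / l) * σ (substIter tilde l k M (j / l)) (j % l)

/-- The group extension substitution `Θ̂(g, M)_j = (g ∘ σ(M,j), ~θ(M)_j)`. -/
def hatTheta {X : Type*} {c : ℕ} (tilde : X → ℕ → X)
    (σ : X → ℕ → Equiv.Perm (Fin c)) : Equiv.Perm (Fin c) × X → ℕ → Equiv.Perm (Fin c) × X :=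
  fun p j => (p.1 * σ p.2 j, tilde p.2 j)

/-- The group `G` generated by the cocycle values `σ(M, j)`, `M ∈ 𝒳`, `j < l`. -/
def cocycleGroup {X : Type*} {c : ℕ} (σ : X → ℕ → Equiv.Perm (Fin c)) (l : ℕ) :
    Subgroup (Equiv.Perm (Fin c)) :=
  Subgroup.closure { g | ∃ M : X, ∃ j, j < l ∧ g = σ M j }

/-!
Every column `a ↦ θ^k(a)_j` maps a column set of minimal cardinality `c(θ)` onto another one,
and a column of cardinality `c(θ)` maps all of them onto the same set `M*`. Since all column sets
can be read at one common level, primitivity of `θ` moves letter and column set simultaneously.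
For the height, going from `(a₀, M₀)` through `M*` back to `(a₀, M₀)` gives one index `s` at a
level `k` such that whenever `a₀` occurs at position `n` of the fixed point of `θ`, the letter
`(a₀, M₀)` occurs at position `n·λ^k + s` of the fixed point of `Θ`. Hence an `m` coprime to `λ`
divides all return times of `(a₀, M₀)` iff it divides all return times of `a₀`.
-/

section Iterates

variable {A : Type*} (θ : A → ℕ → A) {l : ℕ}

theorem substIter_add (k₁ k₂ : ℕ) (a : A) (j : ℕ) :
    substIter θ l (k₁ + k₂) a j
      = substIter θ l k₂ (substIter θ l k₁ a (j / l ^ k₂)) (j % l ^ k₂) := by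
  induction k₂ generalizing j with
  | zero => simp [substIter]
  | succ k ih =>
    have hdiv : j / l / l ^ k = j / l ^ (k + 1) := by
      rw [Nat.div_div_eq_div_mul, ← pow_succ']
    have hmod : j / l % l ^ k = j % l ^ (k + 1) / l := by
      rw [pow_succ', Nat.mod_mul_right_div_self]
    have hmod' : j % l ^ (k + 1) % l = j % l :=
      Nat.mod_mod_of_dvd j (dvd_pow_self l k.succ_ne_zero)
    change θ (substIter θ l (k₁ + k) a (j / l)) (j % l)
      = θ (substIter θ l k _ (j % l ^ (k + 1) / l)) (j % l ^ (k + 1) % l)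
    rw [ih, hdiv, hmod, hmod']

theorem substIter_mul_pow_add (hl : 0 < l) (k₁ k₂ : ℕ) (a : A) (j₁ : ℕ) {j₂ : ℕ}
    (hj₂ : j₂ < l ^ k₂) :
    substIter θ l (k₁ + k₂) a (j₁ * l ^ k₂ + j₂)
      = substIter θ l k₂ (substIter θ l k₁ a j₁) j₂ := by
  have hpos : 0 < l ^ k₂ := Nat.pow_pos hl
  rw [substIter_add, mul_comm, Nat.mul_add_div hpos, Nat.div_eq_of_lt hj₂, Nat.add_zero,
    Nat.mul_add_mod, Nat.mod_eq_of_lt hj₂]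

theorem mul_pow_add_lt_pow_add {k₁ k₂ j₁ j₂ : ℕ} (hj₁ : j₁ < l ^ k₁) (hj₂ : j₂ < l ^ k₂) :
    j₁ * l ^ k₂ + j₂ < l ^ (k₁ + k₂) :=
  calc j₁ * l ^ k₂ + j₂ < (j₁ + 1) * l ^ k₂ := by rw [add_one_mul]; omega
    _ ≤ l ^ k₁ * l ^ k₂ := Nat.mul_le_mul_right _ hj₁
    _ = l ^ (k₁ + k₂) := (pow_add l k₁ k₂).symm

theorem substIter_joinSub {B : Type*} (ζ : B → ℕ → B) (k : ℕ) (a : A) (b : B) (j : ℕ) :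
    substIter (joinSub θ ζ) l k (a, b) j = (substIter θ l k a j, substIter ζ l k b j) := by
  induction k generalizing j with
  | zero => rfl
  | succ k ih => exact congrArg (joinSub θ ζ · (j % l)) (ih (j / l))

theorem substIter_synchPart (k : ℕ) (M : Set A) (j : ℕ) :
    substIter (synchPart θ) l k M j = (fun a => substIter θ l k a j) '' M := by
  induction k generalizing j with
  | zero => simp [substIter]
  | succ k ih =>
    change (fun a => θ a (j % l)) '' substIter (synchPart θ) l k M (j / l) = _
    rw [ih, ← Set.image_comp]
    rfl

end Iterates

section FixedPoint

variable {A : Type*} {θ : A → ℕ → A} {l : ℕ} {a₀ : A}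

theorem substIter_zero_of_fixed (ha₀ : θ a₀ 0 = a₀) (k : ℕ) : substIter θ l k a₀ 0 = a₀ := by
  induction k with
  | zero => rfl
  | succ k ih => simp [substIter, ih, ha₀]

theorem substFixedPoint_zero (ha₀ : θ a₀ 0 = a₀) : substFixedPoint θ l a₀ 0 = a₀ :=
  substIter_zero_of_fixed ha₀ 1

theorem substIter_add_left_of_fixed (hl : 0 < l) (ha₀ : θ a₀ 0 = a₀) (t : ℕ) {k n : ℕ}
    (hn : n < l ^ k) : substIter θ l (t + k) a₀ n = substIter θ l k a₀ n := by
  simpa [substIter_zero_of_fixed ha₀] using substIter_mul_pow_add θ hl t k a₀ 0 hn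

theorem substIter_eq_substFixedPoint (hl : 2 ≤ l) (ha₀ : θ a₀ 0 = a₀) {k n : ℕ}
    (hn : n < l ^ k) : substIter θ l k a₀ n = substFixedPoint θ l a₀ n := by
  have hn' : n < l ^ (n + 1) := n.lt_succ_self.trans (Nat.lt_pow_self (by omega))
  rw [substFixedPoint, ← substIter_add_left_of_fixed (by omega) ha₀ (n + 1) hn,
    ← substIter_add_left_of_fixed (by omega) ha₀ k hn', add_comm]

theorem substFixedPoint_mul_pow_add (hl : 2 ≤ l) (ha₀ : θ a₀ 0 = a₀) (n : ℕ) {k s : ℕ}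
    (hs : s < l ^ k) :
    substFixedPoint θ l a₀ (n * l ^ k + s) = substIter θ l k (substFixedPoint θ l a₀ n) s := by
  have hn : n < l ^ (n + 1) := n.lt_succ_self.trans (Nat.lt_pow_self (by omega))
  rw [← substIter_eq_substFixedPoint hl ha₀ (mul_pow_add_lt_pow_add hn hs),
    substIter_mul_pow_add θ (by omega) _ _ _ _ hs]
  rfl

end FixedPoint

section ColumnSets

variable {A : Type*} {θ : A → ℕ → A} {l : ℕ}

theorem columnNumber_le_ncard {k j : ℕ} (hk : 1 ≤ k) (hj : j < l ^ k) :
    columnNumber θ l ≤ ((fun a => substIter θ l k a j) '' Set.univ).ncard :=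
  Nat.sInf_le ⟨k, hk, j, hj, rfl⟩

theorem exists_column_mem_columnSets (hl : 0 < l) :
    ∃ k j, j < l ^ k ∧ (fun a => substIter θ l k a j) '' Set.univ ∈ columnSets θ l := by
  obtain ⟨k, hk, j, hj, hc⟩ := Nat.sInf_mem (⟨_, 1, le_rfl, 0, by simpa, rfl⟩ :
    { n : ℕ | ∃ k, 1 ≤ k ∧ ∃ j, j < l ^ k ∧
      ((fun a => substIter θ l k a j) '' Set.univ).ncard = n }.Nonempty)
  exact ⟨k, j, hj, ⟨k, hk, j, hj, rfl⟩, hc⟩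

variable [Finite A]

theorem image_column_mem_columnSets (hl : 0 < l) {M : Set A} (hM : M ∈ columnSets θ l)
    {k j : ℕ} (hj : j < l ^ k) : (fun a => substIter θ l k a j) '' M ∈ columnSets θ l := by
  obtain ⟨⟨kM, hkM, jM, hjM, rfl⟩, hc⟩ := hM
  have hidx := mul_pow_add_lt_pow_add hjM hj
  have hcomp : (fun a => substIter θ l k a j) '' ((fun a => substIter θ l kM a jM) '' Set.univ)
      = (fun a => substIter θ l (kM + k) a (jM * l ^ k + j)) '' Set.univ := by
    rw [Set.image_image]
    simp only [substIter_mul_pow_add θ hl _ _ _ _ hj]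
  refine ⟨⟨kM + k, by omega, _, hidx, hcomp⟩,
    le_antisymm ((Set.ncard_image_le (Set.toFinite _)).trans hc.le) ?_⟩
  rw [hcomp]
  exact columnNumber_le_ncard (by omega) hidx

theorem eq_of_subset_of_mem_columnSets {M N : Set A} (hM : M ∈ columnSets θ l)
    (hN : N ∈ columnSets θ l) (h : M ⊆ N) : M = N :=
  Set.eq_of_subset_of_ncard_le h (hN.2.trans hM.2.symm).le (Set.toFinite N)

theorem column_univ_eq_of_le (hl : 0 < l) {k j K : ℕ} (hj : j < l ^ k)
    (hN : (fun a => substIter θ l k a j) '' Set.univ ∈ columnSets θ l) (hK : 1 ≤ K)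
    (hkK : k ≤ K) :
    (fun a => substIter θ l K a j) '' Set.univ = (fun a => substIter θ l k a j) '' Set.univ := by
  have hfactor : (fun a => substIter θ l K a j)
      = (fun a => substIter θ l k a j) ∘ fun a => substIter θ l (K - k) a 0 := by
    funext a
    simpa [Nat.sub_add_cancel hkK] using substIter_mul_pow_add θ hl (K - k) k a 0 hj
  refine Set.eq_of_subset_of_ncard_le ?_ ?_ (Set.toFinite _)
  · rw [hfactor, Set.image_comp]
    exact Set.image_mono (Set.subset_univ _)
  · rw [hN.2]
    exact columnNumber_le_ncard hK (hj.trans_le (Nat.pow_le_pow_right hl hkK))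

theorem exists_level_forall_mem_columnSets (hl : 0 < l) :
    ∃ K, ∀ N ∈ columnSets θ l, ∃ j < l ^ K,
      N = (fun a => substIter θ l K a j) '' Set.univ := by
  choose! lev hlev idx hidx hrepr using fun N (hN : N ∈ columnSets θ l) => hN.1
  obtain ⟨K, hK⟩ := ((Set.toFinite (columnSets θ l)).image lev).bddAbove
  refine ⟨K + 1, fun N hN => ?_⟩
  have hle : lev N ≤ K + 1 := (hK (Set.mem_image_of_mem lev hN)).trans K.le_succ
  refine ⟨idx N, (hidx N hN).trans_le (Nat.pow_le_pow_right hl hle), ?_⟩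
  rw [column_univ_eq_of_le hl (hidx N hN) (hrepr N hN ▸ hN) le_add_self hle]
  exact hrepr N hN

end ColumnSets

section JoinSynchPart

variable {A : Type*} [Finite A] {θ : A → ℕ → A} {l : ℕ}

theorem substPrimitiveOn_joinSub_synchPart (hl : 0 < l) (hθ : SubstPrimitive θ l) :
    SubstPrimitiveOn (joinSub θ (synchPart θ)) l
      { p : A × Set A | p.2 ∈ columnSets θ l ∧ p.1 ∈ p.2 } := by
  obtain ⟨kp, hkp, hθ⟩ := hθ
  obtain ⟨K, hK⟩ := exists_level_forall_mem_columnSets (θ := θ) hl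
  refine ⟨kp + K, by omega, ?_⟩
  rintro ⟨a, M⟩ ⟨hM, -⟩ ⟨b, N⟩ ⟨hN, hbN⟩
  obtain ⟨j₂, hj₂, rfl⟩ := hK N hN
  obtain ⟨b', -, rfl⟩ := hbN
  obtain ⟨j₁, hj₁, rfl⟩ := hθ a b'
  refine ⟨j₁ * l ^ K + j₂, mul_pow_add_lt_pow_add hj₁ hj₂, ?_⟩
  rw [substIter_mul_pow_add _ hl _ _ _ _ hj₂, substIter_joinSub, substIter_synchPart,
    substIter_joinSub, substIter_synchPart]
  exact Prod.ext rfl <| eq_of_subset_of_mem_columnSets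
    (image_column_mem_columnSets hl (image_column_mem_columnSets hl hM hj₁) hj₂) hN
    (Set.image_mono (Set.subset_univ _))

theorem exists_synchronizing_index (hl : 0 < l)
    (hprim : SubstPrimitiveOn (joinSub θ (synchPart θ)) l
      { p : A × Set A | p.2 ∈ columnSets θ l ∧ p.1 ∈ p.2 })
    {a₀ : A} {M₀ : Set A} (hM₀ : M₀ ∈ columnSets θ l) (ha₀M₀ : a₀ ∈ M₀) :
    ∃ k s, s < l ^ k ∧ ∀ N ∈ columnSets θ l,
      substIter (joinSub θ (synchPart θ)) l k (a₀, N) s = (a₀, M₀) := by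
  obtain ⟨k₀, j₀, hj₀, hMstar⟩ := exists_column_mem_columnSets (θ := θ) hl
  obtain ⟨K, -, hK⟩ := hprim
  obtain ⟨j₁, hj₁, hback⟩ :=
    hK (substIter θ l k₀ a₀ j₀, (fun a => substIter θ l k₀ a j₀) '' Set.univ)
    ⟨hMstar, Set.mem_image_of_mem _ (Set.mem_univ a₀)⟩ (a₀, M₀) ⟨hM₀, ha₀M₀⟩
  refine ⟨k₀ + K, j₀ * l ^ K + j₁, mul_pow_add_lt_pow_add hj₀ hj₁, fun N hN => ?_⟩
  have hcollapse : (fun a => substIter θ l k₀ a j₀) '' N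
      = (fun a => substIter θ l k₀ a j₀) '' Set.univ :=
    eq_of_subset_of_mem_columnSets (image_column_mem_columnSets hl hN hj₀) hMstar
      (Set.image_mono (Set.subset_univ _))
  rw [substIter_mul_pow_add _ hl _ _ _ _ hj₁, substIter_joinSub θ _ k₀, substIter_synchPart,
    hcollapse, hback]

end JoinSynchPart

section Height

theorem forall_return_dvd_iff_of_resync {α β : Type*} (f : α → β) (U : ℕ → α) {p s m : ℕ}
    (hm : m.Coprime p) (hsync : ∀ n, f (U n) = f (U 0) → U (n * p + s) = U 0) :
    (∀ r, 1 ≤ r → U r = U 0 → m ∣ r) ↔ (∀ r, 1 ≤ r → f (U r) = f (U 0) → m ∣ r) := by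
  refine ⟨fun hU r hr hfr => ?_, fun hf r hr hUr => hf r hr (congrArg f hUr)⟩
  have hU' : ∀ r, U r = U 0 → m ∣ r := fun r hUr =>
    r.eq_zero_or_pos.elim (fun h => h ▸ dvd_zero m) fun h => hU r h hUr
  have hs : m ∣ s := by simpa using hU' _ (hsync 0 rfl)
  exact hm.dvd_of_dvd_mul_right <| (Nat.dvd_add_left hs).mp (hU' _ (hsync r hfr))

variable {A B : Type*} {θ : A → ℕ → A} {ζ : B → ℕ → B} {l : ℕ} {a₀ : A} {b₀ : B}

theorem substFixedPoint_joinSub (n : ℕ) :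
    substFixedPoint (joinSub θ ζ) l (a₀, b₀) n
      = (substFixedPoint θ l a₀ n, substFixedPoint ζ l b₀ n) :=
  substIter_joinSub θ ζ (n + 1) a₀ b₀ n

theorem substHeight_joinSub_eq (hl : 2 ≤ l) (ha₀ : θ a₀ 0 = a₀) (hb₀ : ζ b₀ 0 = b₀) {k s : ℕ}
    (hs : s < l ^ k)
    (hsync : ∀ n, substFixedPoint θ l a₀ n = a₀ →
      substIter (joinSub θ ζ) l k (a₀, substFixedPoint ζ l b₀ n) s = (a₀, b₀)) :
    substHeight (joinSub θ ζ) l (a₀, b₀) = substHeight θ l a₀ := by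
  have hfix : joinSub θ ζ (a₀, b₀) 0 = (a₀, b₀) := by simp [joinSub, ha₀, hb₀]
  have hU0 := substFixedPoint_zero (l := l) hfix
  have hu0 := substFixedPoint_zero (l := l) ha₀
  refine congrArg sSup <| Set.ext fun m => and_congr_right fun _ => and_congr_right fun hm =>
    (forall_return_dvd_iff_of_resync (s := s) Prod.fst _ (hm.pow_right k) fun n hn => ?_).trans ?_
  · replace hn : substFixedPoint θ l a₀ n = a₀ := by
      rwa [hU0, substFixedPoint_joinSub] at hn
    rw [substFixedPoint_mul_pow_add hl hfix n hs, hU0, substFixedPoint_joinSub, hn]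
    exact hsync n hn
  · simp only [substFixedPoint_joinSub, hu0]

end Height

/-- The joining `Θ = θ ∨ ~θ` of a primitive substitution `θ` with its
synchronizing part, on the alphabet `{(a, M) : M ∈ 𝒳(θ), a ∈ M}`, is primitive; and if
`θ(a₀)_0 = a₀`, `~θ(M₀)_0 = M₀`, `a₀ ∈ M₀ ∈ 𝒳(θ)`, then `h(Θ) = h(θ)`. -/
theorem join_with_synchronizing_primitive_and_height
    {A : Type*} [Finite A] (l : ℕ) (hl : 2 ≤ l)
    (θ : A → ℕ → A) (hθ : SubstPrimitive θ l)
    (a₀ : A) (M₀ : Set A) (hM₀ : M₀ ∈ columnSets θ l) (ha₀M₀ : a₀ ∈ M₀)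
    (ha₀ : θ a₀ 0 = a₀) (hfixM₀ : synchPart θ M₀ 0 = M₀) :
    SubstPrimitiveOn (joinSub θ (synchPart θ)) l
        { p : A × Set A | p.2 ∈ columnSets θ l ∧ p.1 ∈ p.2 } ∧
    substHeight (joinSub θ (synchPart θ)) l (a₀, M₀) = substHeight θ l a₀ := by
  have hl0 : 0 < l := by omega
  have hprim := substPrimitiveOn_joinSub_synchPart hl0 hθ
  obtain ⟨k, s, hs, hsync⟩ := exists_synchronizing_index hl0 hprim hM₀ ha₀M₀
  refine ⟨hprim, substHeight_joinSub_eq hl ha₀ hfixM₀ hs fun n _ => hsync _ ?_⟩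
  rw [substFixedPoint, substIter_synchPart]
  exact image_column_mem_columnSets hl0 hM₀ (n.lt_succ_self.trans (Nat.lt_pow_self (by omega)))
end

section
/- In the group-extension setting below, for every M ∈ 𝒳 there exist k_M ≥ 1 and j_M < λ^{k_M} such that Θ̂^{k_M}(g, M₀)_{j_M} = (g, M) for every g ∈ G. -/
open Filter Topology

lemma substIter_add_s16 {A : Type*} (θ : A → ℕ → A) (l : ℕ) (hl : 0 < l)
    (k₁ k₂ j₁ j₂ : ℕ) (h₂ : j₂ < l ^ k₂) (M : A) :
    substIter θ l (k₁ + k₂) M (j₁ * l ^ k₂ + j₂) =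
      substIter θ l k₂ (substIter θ l k₁ M j₁) j₂ := by
  induction k₂ generalizing j₂ with
  | zero =>
    simp only [pow_zero, Nat.lt_one_iff] at h₂
    subst h₂
    simp [substIter]
  | succ k₂ ih =>
    have hdiv : (j₁ * l ^ (k₂ + 1) + j₂) / l = j₁ * l ^ k₂ + j₂ / l := by
      rw [pow_succ, ← mul_assoc, add_comm, Nat.add_mul_div_right _ _ hl, add_comm]
    have hmod : (j₁ * l ^ (k₂ + 1) + j₂) % l = j₂ % l := by
      rw [pow_succ, ← mul_assoc, add_comm, Nat.add_mul_mod_self_right]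
    have h₂' : j₂ / l < l ^ k₂ := by
      rw [Nat.div_lt_iff_lt_mul hl, ← pow_succ]; exact h₂
    show θ (substIter θ l (k₁ + k₂) M _) _ = θ (substIter θ l k₂ _ _) _
    rw [hdiv, hmod, ih _ h₂']

lemma sigmaIter_add {X : Type*} {c : ℕ} (tilde : X → ℕ → X)
    (σ : X → ℕ → Equiv.Perm (Fin c)) (l : ℕ) (hl : 0 < l)
    (k₁ k₂ j₁ j₂ : ℕ) (h₂ : j₂ < l ^ k₂) (M : X) :
    sigmaIter tilde σ l (k₁ + k₂) M (j₁ * l ^ k₂ + j₂) =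
      sigmaIter tilde σ l k₁ M j₁ *
        sigmaIter tilde σ l k₂ (substIter tilde l k₁ M j₁) j₂ := by
  induction k₂ generalizing j₂ with
  | zero =>
    simp only [pow_zero, Nat.lt_one_iff] at h₂
    subst h₂
    simp [sigmaIter]
  | succ k₂ ih =>
    have hdiv : (j₁ * l ^ (k₂ + 1) + j₂) / l = j₁ * l ^ k₂ + j₂ / l := by
      rw [pow_succ, ← mul_assoc, add_comm, Nat.add_mul_div_right _ _ hl, add_comm]
    have hmod : (j₁ * l ^ (k₂ + 1) + j₂) % l = j₂ % l := by
      rw [pow_succ, ← mul_assoc, add_comm, Nat.add_mul_mod_self_right]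
    have h₂' : j₂ / l < l ^ k₂ := by
      rw [Nat.div_lt_iff_lt_mul hl, ← pow_succ]; exact h₂
    show sigmaIter tilde σ l (k₁ + k₂) M _ * σ (substIter tilde l (k₁ + k₂) M _) _ =
      _ * (sigmaIter tilde σ l k₂ _ _ * σ (substIter tilde l k₂ _ _) _)
    rw [hdiv, hmod, ih _ h₂', substIter_add_s16 tilde l hl k₁ k₂ j₁ (j₂ / l) h₂' M, mul_assoc]

lemma substIter_hatTheta {X : Type*} {c : ℕ} (tilde : X → ℕ → X)
    (σ : X → ℕ → Equiv.Perm (Fin c)) (l : ℕ) (k : ℕ) (g : Equiv.Perm (Fin c))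
    (M : X) (j : ℕ) :
    substIter (hatTheta tilde σ) l k (g, M) j =
      (g * sigmaIter tilde σ l k M j, substIter tilde l k M j) := by
  induction k generalizing j with
  | zero => simp [substIter, sigmaIter]
  | succ k ih =>
    show hatTheta tilde σ (substIter (hatTheta tilde σ) l k (g, M) (j / l)) (j % l) = _
    rw [ih]
    simp only [hatTheta, sigmaIter, substIter, mul_assoc]

/-- In the group-extension setting, for every `M ∈ 𝒳` there exist
`k_M ≥ 1` and `j_M < λ^{k_M}` with `Θ̂^{k_M}(g, M₀)_{j_M} = (g, M)` for every `g ∈ G`. -/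
theorem hatTheta_reaches_every_letter_from_base
    {X : Type*} [Finite X] (l c : ℕ) (hl : 2 ≤ l) (hc : 1 ≤ c)
    (tilde : X → ℕ → X) (hprim : SubstPrimitive tilde l)
    (σ : X → ℕ → Equiv.Perm (Fin c)) (M₀ : X)
    (H1 : ∃ k₀, 1 ≤ k₀ ∧ ∃ j₀, j₀ < l ^ k₀ ∧ ∀ M : X,
      substIter tilde l k₀ M j₀ = M₀ ∧ sigmaIter tilde σ l k₀ M j₀ = 1)
    (H2a : tilde M₀ 0 = M₀) (H2b : σ M₀ 0 = 1) :
    ∀ M : X, ∃ kM, 1 ≤ kM ∧ ∃ jM, jM < l ^ kM ∧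
      ∀ g ∈ cocycleGroup σ l,
        substIter (hatTheta tilde σ) l kM (g, M₀) jM = (g, M) := by
  intro M
  have hl0 : 0 < l := by omega
  obtain ⟨kp, hkp1, hp⟩ := hprim
  obtain ⟨jp, hjp, hjpM⟩ := hp M₀ M
  obtain ⟨k₀, hk₀1, j₀, hj₀, hH1⟩ := H1
  set h : Equiv.Perm (Fin c) := sigmaIter tilde σ l kp M₀ jp with hh
  -- the loop at M₀ : first go to M, then use H1 to come back with trivial cocycle
  have loop : ∀ n : ℕ, ∃ k j, j < l ^ k ∧ substIter tilde l k M₀ j = M₀ ∧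
      sigmaIter tilde σ l k M₀ j = h ^ n := by
    intro n
    induction n with
    | zero => exact ⟨0, 0, by simp, rfl, by simp [sigmaIter]⟩
    | succ n ih =>
      obtain ⟨k, j, hj, hsub, hsig⟩ := ih
      refine ⟨k + (kp + k₀), (j * l ^ kp + jp) * l ^ k₀ + j₀, ?_, ?_, ?_⟩
      · calc (j * l ^ kp + jp) * l ^ k₀ + j₀
            < (j * l ^ kp + jp) * l ^ k₀ + l ^ k₀ := by omega
          _ = (j * l ^ kp + jp + 1) * l ^ k₀ := by ring
          _ ≤ (l ^ (k + kp)) * l ^ k₀ := by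
              have : j * l ^ kp + jp + 1 ≤ l ^ (k + kp) := by
                have h1 : j + 1 ≤ l ^ k := hj
                calc j * l ^ kp + jp + 1 ≤ j * l ^ kp + l ^ kp := by omega
                  _ = (j + 1) * l ^ kp := by ring
                  _ ≤ l ^ k * l ^ kp := Nat.mul_le_mul_right _ h1
                  _ = l ^ (k + kp) := (pow_add l k kp).symm
              exact Nat.mul_le_mul_right _ this
          _ = l ^ (k + (kp + k₀)) := by rw [← pow_add, add_assoc]
      · have e1 : k + (kp + k₀) = (k + kp) + k₀ := by omega
        rw [e1, substIter_add_s16 tilde l hl0 (k + kp) k₀ _ j₀ hj₀,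
          substIter_add_s16 tilde l hl0 k kp j jp hjp, hsub]
        exact (hH1 _).1
      · have e1 : k + (kp + k₀) = (k + kp) + k₀ := by omega
        rw [e1, sigmaIter_add tilde σ l hl0 (k + kp) k₀ _ j₀ hj₀,
          sigmaIter_add tilde σ l hl0 k kp j jp hjp, hsub, hsig, (hH1 _).2, mul_one,
          ← hh, pow_succ]
  obtain ⟨k, j, hj, hsub, hsig⟩ := loop (orderOf h - 1)
  refine ⟨k + kp, by omega, j * l ^ kp + jp, ?_, ?_⟩
  · calc j * l ^ kp + jp < j * l ^ kp + l ^ kp := by omega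
      _ = (j + 1) * l ^ kp := by ring
      _ ≤ l ^ k * l ^ kp := Nat.mul_le_mul_right _ hj
      _ = l ^ (k + kp) := (pow_add l k kp).symm
  · intro g _
    rw [substIter_hatTheta, substIter_add_s16 tilde l hl0 k kp j jp hjp M₀,
      sigmaIter_add tilde σ l hl0 k kp j jp hjp M₀, hsub, hjpM, hsig, ← hh]
    have hord : 0 < orderOf h := orderOf_pos h
    rw [← pow_succ, Nat.sub_add_cancel hord, pow_orderOf_eq_one, mul_one]
end

section
/- In the group-extension setting below, the column number of Θ̂ equals the order of the group G: c(Θ̂) = |G|. -/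
open Filter Topology

lemma sigmaIter_mem_cocycleGroup {X : Type*} {c : ℕ} (tilde : X → ℕ → X)
    (σ : X → ℕ → Equiv.Perm (Fin c)) (l : ℕ) (hl : 0 < l) (k : ℕ) (M : X) (j : ℕ) :
    sigmaIter tilde σ l k M j ∈ cocycleGroup σ l := by
  induction k generalizing M j with
  | zero => exact one_mem _
  | succ k ih =>
      exact mul_mem (ih M (j / l))
        (Subgroup.subset_closure ⟨_, j % l, Nat.mod_lt _ hl, rfl⟩)

/-- In the group-extension setting, the column number of `Θ̂` equals
the order of the group `G`. -/
theorem hatTheta_columnNumber_eq_card_group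
    {X : Type*} [Finite X] (l c : ℕ) (hl : 2 ≤ l) (hc : 1 ≤ c)
    (tilde : X → ℕ → X) (hprim : SubstPrimitive tilde l)
    (σ : X → ℕ → Equiv.Perm (Fin c)) (M₀ : X)
    (H1 : ∃ k₀, 1 ≤ k₀ ∧ ∃ j₀, j₀ < l ^ k₀ ∧ ∀ M : X,
      substIter tilde l k₀ M j₀ = M₀ ∧ sigmaIter tilde σ l k₀ M j₀ = 1)
    (H2a : tilde M₀ 0 = M₀) (H2b : σ M₀ 0 = 1) :
    columnNumberOn (hatTheta tilde σ) l
        { p : Equiv.Perm (Fin c) × X | p.1 ∈ cocycleGroup σ l } =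
      Nat.card (cocycleGroup σ l) := by
  have hl0 : 0 < l := by omega
  set G := cocycleGroup σ l with hG
  set S : Set (Equiv.Perm (Fin c) × X) := { p | p.1 ∈ G } with hS
  obtain ⟨k₀, hk₀, j₀, hj₀, hH1⟩ := H1
  -- the image at (k₀, j₀) is exactly G × {M₀}
  have himg : (fun a => substIter (hatTheta tilde σ) l k₀ a j₀) '' S
      = (fun g => (g, M₀)) '' (G : Set (Equiv.Perm (Fin c))) := by
    ext p
    constructor
    · rintro ⟨⟨g, M⟩, hg, rfl⟩
      refine ⟨g, hg, ?_⟩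
      show (g, M₀) = substIter (hatTheta tilde σ) l k₀ (g, M) j₀
      rw [substIter_hatTheta, (hH1 M).1, (hH1 M).2, mul_one]
    · rintro ⟨g, hg, rfl⟩
      refine ⟨(g, M₀), hg, ?_⟩
      show substIter (hatTheta tilde σ) l k₀ (g, M₀) j₀ = (g, M₀)
      rw [substIter_hatTheta, (hH1 M₀).1, (hH1 M₀).2, mul_one]
  have hGcard : ((G : Set (Equiv.Perm (Fin c))).ncard) = Nat.card G := by
    rw [← Nat.card_coe_set_eq, SetLike.coe_sort_coe]
  have hmem : Nat.card G ∈ { n : ℕ | ∃ k, 1 ≤ k ∧ ∃ j, j < l ^ k ∧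
      ((fun a => substIter (hatTheta tilde σ) l k a j) '' S).ncard = n } := by
    refine ⟨k₀, hk₀, j₀, hj₀, ?_⟩
    rw [himg, Set.ncard_image_of_injective _ (fun a b h => (Prod.ext_iff.1 h).1),
      hGcard]
  -- lower bound
  have hlb : ∀ n ∈ { n : ℕ | ∃ k, 1 ≤ k ∧ ∃ j, j < l ^ k ∧
      ((fun a => substIter (hatTheta tilde σ) l k a j) '' S).ncard = n },
      Nat.card G ≤ n := by
    rintro n ⟨k, hk, j, hj, rfl⟩
    have hsub : (fun g : Equiv.Perm (Fin c) =>
        (g * sigmaIter tilde σ l k M₀ j, substIter tilde l k M₀ j)) ''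
          (G : Set (Equiv.Perm (Fin c)))
        ⊆ (fun a => substIter (hatTheta tilde σ) l k a j) '' S := by
      rintro p ⟨g, hg, rfl⟩
      exact ⟨(g, M₀), hg, by
        show substIter (hatTheta tilde σ) l k (g, M₀) j = _
        rw [substIter_hatTheta]⟩
    have hinj : Function.Injective (fun g : Equiv.Perm (Fin c) =>
        (g * sigmaIter tilde σ l k M₀ j, substIter tilde l k M₀ j)) := by
      intro a b h
      exact mul_right_cancel (Prod.ext_iff.1 h).1
    calc Nat.card G = ((fun g : Equiv.Perm (Fin c) =>
            (g * sigmaIter tilde σ l k M₀ j, substIter tilde l k M₀ j)) ''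
            (G : Set (Equiv.Perm (Fin c)))).ncard := by
          rw [Set.ncard_image_of_injective _ hinj, hGcard]
      _ ≤ _ := Set.ncard_le_ncard hsub (Set.toFinite _)
  exact le_antisymm (Nat.sInf_le hmem) (le_csInf ⟨_, hmem⟩ hlb)
end
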